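/- arXiv:2211.06107 — 4 statements merged into one kernel-verified Lean document; each statement's English description precedes it below -/
import Mathlib

section
/- Let e0, e1 be the standard basis of ℂ², let ψ⁻ = (1/√2)(e0⊗e1 − e1⊗e0) ∈ ℂ⁴ be the singlet vector, and define for α, β ∈ ℝ the vectors ε_α = (1/√2)(e0⊗e1 + e^{iα} e1⊗e0) and ξ_β = (1/√2)(x₊⊗x₋ + e^{iβ} x₋⊗x₊), where x₊ = (e0+e1)/√2 and x₋ = (e0−e1)/√2. Then the intersection of the convex hull (over ℝ) of { |ε_α⟩⟨ε_α| : α ∈ ℝ } with the convex hull of { |ξ_β⟩⟨ξ_β| : β ∈ ℝ } is exactly the singleton { |ψ⁻⟩⟨ψ⁻| }. -/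
open Matrix

noncomputable section

/-- The outer product `|u⟩⟨v|` of two vectors. -/
def outer {ι : Type*} (u v : ι → ℂ) : Matrix ι ι ℂ :=
  Matrix.of fun i j => u i * star (v j)

/-- The tensor (Kronecker) product of two qubit vectors. -/
def tens (u v : Fin 2 → ℂ) : Fin 2 × Fin 2 → ℂ := fun p => u p.1 * v p.2

def e0 : Fin 2 → ℂ := ![1, 0]
def e1 : Fin 2 → ℂ := ![0, 1]

/-- `x₊ = (e0 + e1)/√2`. -/
def xp : Fin 2 → ℂ := ((Real.sqrt 2 : ℂ))⁻¹ • (e0 + e1)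
/-- `x₋ = (e0 − e1)/√2`. -/
def xm : Fin 2 → ℂ := ((Real.sqrt 2 : ℂ))⁻¹ • (e0 - e1)

/-- The singlet vector `ψ⁻ = (1/√2)(e0⊗e1 − e1⊗e0)`. -/
def psiMinus : Fin 2 × Fin 2 → ℂ :=
  ((Real.sqrt 2 : ℂ))⁻¹ • (tens e0 e1 - tens e1 e0)

/-- `ε_α = (1/√2)(e0⊗e1 + e^{iα} e1⊗e0)`. -/
def eps (α : ℝ) : Fin 2 × Fin 2 → ℂ :=
  ((Real.sqrt 2 : ℂ))⁻¹ • (tens e0 e1 + Complex.exp ((α : ℂ) * Complex.I) • tens e1 e0)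

/-- `ξ_β = (1/√2)(x₊⊗x₋ + e^{iβ} x₋⊗x₊)`. -/
def xi (β : ℝ) : Fin 2 × Fin 2 → ℂ :=
  ((Real.sqrt 2 : ℂ))⁻¹ • (tens xp xm + Complex.exp ((β : ℂ) * Complex.I) • tens xm xp)

/-! ### auxiliary lemmas -/

local notation "r" => ((Real.sqrt 2 : ℝ) : ℂ)

lemma hr : r * r = 2 := by
  norm_cast
  rw [Real.mul_self_sqrt (by norm_num)]

lemma hri : r⁻¹ * r⁻¹ = (2:ℂ)⁻¹ := by
  rw [← mul_inv, hr]

lemma star_rinv : star (r⁻¹) = r⁻¹ := by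
  simp [Complex.star_def, map_inv₀, Complex.conj_ofReal]

lemma hwstar (α : ℝ) :
    Complex.exp ((α:ℂ) * Complex.I) * star (Complex.exp ((α:ℂ) * Complex.I)) = 1 := by
  rw [Complex.star_def, ← Complex.exp_conj]
  simp only [_root_.map_mul, Complex.conj_ofReal, Complex.conj_I, mul_neg]
  rw [← Complex.exp_add]
  simp

lemma eps_app (α : ℝ) (i j : Fin 2) :
    eps α (i, j) = if i = 0 ∧ j = 1 then r⁻¹ else
      if i = 1 ∧ j = 0 then r⁻¹ * Complex.exp ((α:ℂ)*Complex.I) else 0 := by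
  fin_cases i <;> fin_cases j <;>
    simp [eps, tens, e0, e1, Pi.smul_apply, Pi.add_apply, smul_eq_mul, mul_comm]

lemma xi_app (β : ℝ) (i j : Fin 2) :
    xi β (i, j) = r⁻¹ * (2:ℂ)⁻¹ *
      (if i = j then ((-1:ℂ))^(i:ℕ) * (1 + Complex.exp ((β:ℂ)*Complex.I))
       else ((-1:ℂ))^(j:ℕ) * (1 - Complex.exp ((β:ℂ)*Complex.I))) := by
  fin_cases i <;> fin_cases j <;>
    · simp [xi, xp, xm, tens, e0, e1, Pi.smul_apply, Pi.add_apply, Pi.sub_apply, smul_eq_mul]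
      field_simp
      try (left; exact hr.symm)
      try ring_nf
      try linear_combination (r - Complex.exp ((β:ℂ)*Complex.I) * r) * hr
      try linear_combination (Complex.exp ((β:ℂ)*Complex.I) * r - r) * hr
      try linear_combination (Complex.exp ((β:ℂ)*Complex.I) * r + r) * hr
      rw [← hr]; ring

lemma psi_app (i j : Fin 2) :
    psiMinus (i, j) = if i = 0 ∧ j = 1 then r⁻¹ else
      if i = 1 ∧ j = 0 then -r⁻¹ else 0 := by
  fin_cases i <;> fin_cases j <;>
    simp [psiMinus, tens, e0, e1, Pi.smul_apply, Pi.sub_apply, smul_eq_mul]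

/-- The affine-slice description of the first convex hull. -/
def S1 : Set (Matrix (Fin 2 × Fin 2) (Fin 2 × Fin 2) ℂ) :=
  {M | (∀ p q : Fin 2 × Fin 2, (p.1 = p.2 ∨ q.1 = q.2) → M p q = 0) ∧
       M (0,1) (0,1) = 1/2 ∧ M (1,0) (1,0) = 1/2 ∧
       M (1,0) (0,1) = star (M (0,1) (1,0))}

/-- The affine-slice description needed from the second convex hull. -/
def S2 : Set (Matrix (Fin 2 × Fin 2) (Fin 2 × Fin 2) ℂ) :=
  {M | M (0,1) (1,0) - M (0,0) (0,0) = -(1/2)}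

lemma convex_S1 : Convex ℝ S1 := by
  rintro x ⟨hx0, hx1, hx2, hx3⟩ y ⟨hy0, hy1, hy2, hy3⟩ a b ha hb hab
  have hab' : ((a:ℂ) + (b:ℂ)) = 1 := by exact_mod_cast congrArg (Complex.ofReal) hab
  refine ⟨fun p q h => ?_, ?_, ?_, ?_⟩ <;>
    simp only [Matrix.add_apply, Matrix.smul_apply, Complex.real_smul]
  · rw [hx0 p q h, hy0 p q h]; ring
  · rw [hx1, hy1]; linear_combination hab' / 2
  · rw [hx2, hy2]; linear_combination hab' / 2
  · rw [hx3, hy3, star_add, star_mul', star_mul']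
    simp [Complex.conj_ofReal]

lemma convex_S2 : Convex ℝ S2 := by
  rintro x hx y hy a b ha hb hab
  have hab' : ((a:ℂ) + (b:ℂ)) = 1 := by exact_mod_cast congrArg (Complex.ofReal) hab
  simp only [S2, Set.mem_setOf_eq, Matrix.add_apply, Matrix.smul_apply, Complex.real_smul] at *
  linear_combination (a:ℂ) * hx + (b:ℂ) * hy - hab' / 2

lemma gen1_mem (α : ℝ) : outer (eps α) (eps α) ∈ S1 := by
  refine ⟨?_, ?_, ?_, ?_⟩
  · rintro ⟨i, j⟩ ⟨k, l⟩ (h | h) <;> dsimp only at h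
    · have h0 : eps α (i, j) = 0 := by
        rw [eps_app]; fin_cases i <;> fin_cases j <;> simp_all
      simp [outer, h0]
    · have h0 : eps α (k, l) = 0 := by
        rw [eps_app]; fin_cases k <;> fin_cases l <;> simp_all
      simp [outer, h0]
  · simp only [outer, Matrix.of_apply, eps_app]
    norm_num [star_rinv]
    linear_combination hri
  · simp only [outer, Matrix.of_apply, eps_app]
    norm_num [star_mul', star_rinv]
    calc r⁻¹ * Complex.exp ((α:ℂ)*Complex.I) * (r⁻¹ * star (Complex.exp ((α:ℂ)*Complex.I)))
        = (r⁻¹ * r⁻¹) * (Complex.exp ((α:ℂ)*Complex.I) * star (Complex.exp ((α:ℂ)*Complex.I))) := by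
          ring
      _ = 1/2 := by rw [hri, hwstar]; norm_num
  · simp only [outer, Matrix.of_apply, eps_app]
    norm_num [star_mul', star_star, star_rinv]
    ring

lemma gen2_mem (β : ℝ) : outer (xi β) (xi β) ∈ S2 := by
  simp only [S2, Set.mem_setOf_eq, outer, Matrix.of_apply, xi_app]
  norm_num [star_mul', star_sub, star_add, star_rinv, star_star]
  try simp only [Complex.star_def]
  have hw := hwstar β
  simp only [Complex.star_def] at hw
  linear_combination (-(1/2) * (1 + Complex.exp ((β:ℂ)*Complex.I) *
      (starRingEnd ℂ) (Complex.exp ((β:ℂ)*Complex.I)))) * hri - (1/4) * hw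

lemma outer_neg (u : Fin 2 × Fin 2 → ℂ) : outer (-u) (-u) = outer u u := by
  ext i j
  simp [outer]

lemma eps_pi : eps Real.pi = psiMinus := by
  funext p
  obtain ⟨i, j⟩ := p
  rw [eps_app, psi_app]
  split_ifs <;> simp [Complex.exp_pi_mul_I]

lemma xi_pi : xi Real.pi = -psiMinus := by
  funext p
  obtain ⟨i, j⟩ := p
  rw [xi_app]
  show _ = -(psiMinus (i, j))
  rw [psi_app]
  fin_cases i <;> fin_cases j <;> simp [Complex.exp_pi_mul_I] <;> ring

theorem intersection_of_first_two_scenarios_is_singlet :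
    convexHull ℝ {M | ∃ α : ℝ, M = outer (eps α) (eps α)} ∩
      convexHull ℝ {M | ∃ β : ℝ, M = outer (xi β) (xi β)}
    = {outer psiMinus psiMinus} := by
  ext M
  simp only [Set.mem_inter_iff, Set.mem_singleton_iff]
  constructor
  · rintro ⟨h1, h2⟩
    have hS1 : M ∈ S1 := by
      refine convexHull_min ?_ convex_S1 h1
      rintro N ⟨α, rfl⟩; exact gen1_mem α
    have hS2 : M ∈ S2 := by
      refine convexHull_min ?_ convex_S2 h2
      rintro N ⟨β, rfl⟩; exact gen2_mem β
    obtain ⟨hz, ha, hb, hc⟩ := hS1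
    have h00 : M (0,0) (0,0) = 0 := hz (0,0) (0,0) (Or.inl rfl)
    have h01 : M (0,1) (1,0) = -(1/2) := by
      have := hS2
      simp only [S2, Set.mem_setOf_eq, h00, sub_zero] at this
      exact this
    have h10 : M (1,0) (0,1) = -(1/2) := by
      rw [hc, h01]
      simp
    ext p q
    obtain ⟨i, j⟩ := p
    obtain ⟨k, l⟩ := q
    have hpsi : ∀ (i j k l : Fin 2), outer psiMinus psiMinus (i,j) (k,l) =
        psiMinus (i,j) * psiMinus (k,l) := by
      intro i j k l
      simp only [outer, Matrix.of_apply, psi_app]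
      split_ifs <;> simp [star_rinv]
    fin_cases i <;> fin_cases j <;> fin_cases k <;> fin_cases l <;>
      simp only [hpsi, psi_app] <;>
      simp [hz, ha, hb, h01, h10, hri, neg_mul, mul_neg]
  · rintro rfl
    constructor
    · apply subset_convexHull
      exact ⟨Real.pi, by rw [eps_pi]⟩
    · apply subset_convexHull
      exact ⟨Real.pi, by rw [xi_pi, outer_neg]⟩
end
end

section
/- Let e0, e1 be the standard basis of ℂ², x₊ = (e0+e1)/√2, x₋ = (e0−e1)/√2, y = (e0 + i·e1)/√2, ȳ = (e0 − i·e1)/√2, and for α, β, δ ∈ ℝ set ε_α = (1/√2)(e0⊗e1 + e^{iα} e1⊗e0), ξ_β = (1/√2)(x₊⊗x₋ + e^{iβ} x₋⊗x₊), ζ_δ = (1/√2)(y⊗y + e^{iδ} ȳ⊗ȳ). Then the triple intersection of the convex hulls (over ℝ) of the three sets { |ε_α⟩⟨ε_α| : α ∈ ℝ }, { |ξ_β⟩⟨ξ_β| : β ∈ ℝ }, and { |ζ_δ⟩⟨ζ_δ| : δ ∈ ℝ } is empty. -/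
open Matrix

noncomputable section

/-- `y = (e0 + i·e1)/√2`. -/
def yp : Fin 2 → ℂ := ((Real.sqrt 2 : ℂ))⁻¹ • (e0 + Complex.I • e1)
/-- `ȳ = (e0 − i·e1)/√2`. -/
def ym : Fin 2 → ℂ := ((Real.sqrt 2 : ℂ))⁻¹ • (e0 - Complex.I • e1)

/-- `ζ_δ = (1/√2)(y⊗y + e^{iδ} ȳ⊗ȳ)`. -/
def zeta (δ : ℝ) : Fin 2 × Fin 2 → ℂ :=
  ((Real.sqrt 2 : ℂ))⁻¹ • (tens yp yp + Complex.exp ((δ : ℂ) * Complex.I) • tens ym ym)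

/-- Real part of a single matrix entry, as an `ℝ`-linear functional. -/
def entryRe (p q : Fin 2 × Fin 2) : Matrix (Fin 2 × Fin 2) (Fin 2 × Fin 2) ℂ →ₗ[ℝ] ℝ where
  toFun M := (M p q).re
  map_add' M N := by simp [Matrix.add_apply]
  map_smul' r M := by simp [Matrix.smul_apply, Complex.smul_re]

lemma entryRe_apply (p q : Fin 2 × Fin 2) (M : Matrix (Fin 2 × Fin 2) (Fin 2 × Fin 2) ℂ) :
    entryRe p q M = (M p q).re := rfl

def dF : Matrix (Fin 2 × Fin 2) (Fin 2 × Fin 2) ℂ →ₗ[ℝ] ℝ :=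
  entryRe (0,1) (0,1) + entryRe (1,0) (1,0)
def hF : Matrix (Fin 2 × Fin 2) (Fin 2 × Fin 2) ℂ →ₗ[ℝ] ℝ := entryRe (0,1) (1,0)

lemma hull_const {f : Matrix (Fin 2 × Fin 2) (Fin 2 × Fin 2) ℂ →ₗ[ℝ] ℝ} {c : ℝ}
    {s : Set (Matrix (Fin 2 × Fin 2) (Fin 2 × Fin 2) ℂ)}
    (hs : ∀ M ∈ s, f M = c) {M} (hM : M ∈ convexHull ℝ s) : f M = c :=
  convexHull_min hs (convex_hyperplane f.isLinear c) hM

lemma xi_neg (β : ℝ) : xi β (1,0) = - xi β (0,1) := by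
  simp [xi, tens, xp, xm, e0, e1]; ring

lemma zeta_eq (δ : ℝ) : zeta δ (1,0) = zeta δ (0,1) := by
  simp [zeta, tens, yp, ym, e0, e1]; ring

lemma eps_d (α : ℝ) : dF (outer (eps α) (eps α)) = 1 := by
  have h01 : eps α (0,1) = ((Real.sqrt 2 : ℂ))⁻¹ := by simp [eps, tens, e0, e1]
  have h10 : eps α (1,0) = ((Real.sqrt 2 : ℂ))⁻¹ * Complex.exp ((α : ℂ) * Complex.I) := by
    simp [eps, tens, e0, e1]
  have hs : ((Real.sqrt 2 : ℂ))⁻¹ * star ((Real.sqrt 2 : ℂ))⁻¹ = (1/2 : ℂ) := by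
    rw [show star ((Real.sqrt 2 : ℂ))⁻¹ = ((Real.sqrt 2 : ℂ))⁻¹ by
      simp [star_inv₀, Complex.star_def, Complex.conj_ofReal]]
    rw [← mul_inv]
    norm_cast
    rw [Real.mul_self_sqrt (by norm_num)]
    norm_num
  have he : Complex.exp ((α : ℂ) * Complex.I) * star (Complex.exp ((α : ℂ) * Complex.I)) = 1 := by
    rw [show star (Complex.exp ((α : ℂ) * Complex.I)) = Complex.exp (-((α : ℂ) * Complex.I)) by
      rw [Complex.star_def, ← Complex.exp_conj]
      congr 1
      simp [Complex.conj_ofReal]]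
    rw [← Complex.exp_add]
    simp
  simp only [dF, hF, entryRe_apply, LinearMap.add_apply, LinearMap.coe_mk, AddHom.coe_mk,
    outer, Matrix.of_apply, h01, h10]
  have : ((Real.sqrt 2 : ℂ))⁻¹ * star ((Real.sqrt 2 : ℂ))⁻¹ +
      ((Real.sqrt 2 : ℂ))⁻¹ * Complex.exp ((α : ℂ) * Complex.I) *
        star (((Real.sqrt 2 : ℂ))⁻¹ * Complex.exp ((α : ℂ) * Complex.I)) = 1 := by
    rw [star_mul']
    calc ((Real.sqrt 2 : ℂ))⁻¹ * star ((Real.sqrt 2 : ℂ))⁻¹ +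
        ((Real.sqrt 2 : ℂ))⁻¹ * Complex.exp ((α : ℂ) * Complex.I) *
          (star ((Real.sqrt 2 : ℂ))⁻¹ * star (Complex.exp ((α : ℂ) * Complex.I)))
        = ((Real.sqrt 2 : ℂ))⁻¹ * star ((Real.sqrt 2 : ℂ))⁻¹ +
          ((Real.sqrt 2 : ℂ))⁻¹ * star ((Real.sqrt 2 : ℂ))⁻¹ *
            (Complex.exp ((α : ℂ) * Complex.I) * star (Complex.exp ((α : ℂ) * Complex.I))) := by ring
      _ = 1 := by rw [hs, he]; norm_num
  have := congrArg Complex.re this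
  rw [Complex.add_re] at this
  simpa using this

lemma xi_rel (β : ℝ) :
    2 * hF (outer (xi β) (xi β)) + dF (outer (xi β) (xi β)) = 0 := by
  simp only [dF, hF, entryRe_apply, LinearMap.add_apply, LinearMap.coe_mk, AddHom.coe_mk,
    outer, Matrix.of_apply, xi_neg β]
  simp [mul_neg, neg_mul]
  ring

lemma zeta_rel (δ : ℝ) :
    2 * hF (outer (zeta δ) (zeta δ)) - dF (outer (zeta δ) (zeta δ)) = 0 := by
  simp only [dF, hF, entryRe_apply, LinearMap.add_apply, LinearMap.coe_mk, AddHom.coe_mk,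
    outer, Matrix.of_apply, zeta_eq δ]
  ring

theorem triple_intersection_of_scenario_solution_sets_is_empty :
    convexHull ℝ {M | ∃ α : ℝ, M = outer (eps α) (eps α)} ∩
      convexHull ℝ {M | ∃ β : ℝ, M = outer (xi β) (xi β)} ∩
      convexHull ℝ {M | ∃ δ : ℝ, M = outer (zeta δ) (zeta δ)}
    = ∅ := by
  rw [Set.eq_empty_iff_forall_notMem]
  rintro M ⟨⟨hA, hB⟩, hC⟩
  have h1 : dF M = 1 := by
    refine hull_const ?_ hA
    rintro N ⟨α, rfl⟩; exact eps_d α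
  have h2 : ((2:ℝ) • hF + dF) M = 0 := by
    refine hull_const ?_ hB
    rintro N ⟨β, rfl⟩
    simpa [two_mul] using xi_rel β
  have h3 : ((2:ℝ) • hF - dF) M = 0 := by
    refine hull_const ?_ hC
    rintro N ⟨δ, rfl⟩
    simpa [two_mul] using zeta_rel δ
  simp only [LinearMap.add_apply, LinearMap.sub_apply, LinearMap.smul_apply, smul_eq_mul] at h2 h3
  linarith
end
end

section
/- Let ρ be a positive semidefinite complex matrix indexed by (Fin m)×(Fin n), and define its partial transpose on the second subsystem S by S((i,j),(k,l)) = ρ((i,l),(k,j)) for all i,k ∈ Fin m and j,l ∈ Fin n. Then S is positive on pure tensors: for all u ∈ ℂᵐ and v ∈ ℂⁿ, the inner product ⟨u⊗v, S·(u⊗v)⟩ is a nonnegative real number, where (u⊗v)(i,j) = u(i)·v(j). -/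
open Matrix
open scoped ComplexOrder

theorem partial_transpose_is_positive_on_pure_tensors {m n : ℕ}
    (ρ : Matrix (Fin m × Fin n) (Fin m × Fin n) ℂ)
    (hρ : ρ.PosSemidef)
    (S : Matrix (Fin m × Fin n) (Fin m × Fin n) ℂ)
    (hS : ∀ (i k : Fin m) (j l : Fin n), S (i, j) (k, l) = ρ (i, l) (k, j))
    (u : Fin m → ℂ) (v : Fin n → ℂ) :
    (0 ≤ (star (fun p : Fin m × Fin n => u p.1 * v p.2) ⬝ᵥ
        S.mulVec (fun p : Fin m × Fin n => u p.1 * v p.2)).re) ∧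
    (star (fun p : Fin m × Fin n => u p.1 * v p.2) ⬝ᵥ
        S.mulVec (fun p : Fin m × Fin n => u p.1 * v p.2)).im = 0 := by
  set x : Fin m × Fin n → ℂ := fun p => u p.1 * star (v p.2) with hx
  have key : (star (fun p : Fin m × Fin n => u p.1 * v p.2) ⬝ᵥ
      S.mulVec (fun p : Fin m × Fin n => u p.1 * v p.2)) =
      star x ⬝ᵥ ρ.mulVec x := by
    simp only [dotProduct, mulVec, Pi.star_apply, Finset.mul_sum]
    simp only [Fintype.sum_prod_type]
    refine Finset.sum_congr rfl fun i _ => ?_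
    have hterm : ∀ (j : Fin n) (k : Fin m) (l : Fin n),
        star (u i * v j) * (S (i, j) (k, l) * (u k * v l)) =
        star (x (i, l)) * (ρ (i, l) (k, j) * x (k, j)) := by
      intro j k l
      rw [hS]
      simp only [hx, star_mul', star_star]
      ring
    calc ∑ j, ∑ k, ∑ l, star (u i * v j) * (S (i, j) (k, l) * (u k * v l))
        = ∑ j, ∑ k, ∑ l, star (x (i, l)) * (ρ (i, l) (k, j) * x (k, j)) :=
          Finset.sum_congr rfl fun j _ => Finset.sum_congr rfl fun k _ =>
            Finset.sum_congr rfl fun l _ => hterm j k l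
      _ = ∑ k, ∑ j, ∑ l, star (x (i, l)) * (ρ (i, l) (k, j) * x (k, j)) :=
          Finset.sum_comm
      _ = ∑ k, ∑ l, ∑ j, star (x (i, l)) * (ρ (i, l) (k, j) * x (k, j)) :=
          Finset.sum_congr rfl fun k _ => Finset.sum_comm
      _ = ∑ l, ∑ k, ∑ j, star (x (i, l)) * (ρ (i, l) (k, j) * x (k, j)) :=
          Finset.sum_comm
      _ = ∑ j, ∑ k, ∑ l, star (x (i, j)) * (ρ (i, j) (k, l) * x (k, l)) := rfl
  rw [key]
  have h := hρ.dotProduct_mulVec_nonneg x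
  rw [Complex.le_def] at h
  exact ⟨h.1, h.2.symm⟩
end

section
/- Let e0, e1 be the standard basis of ℂ², ψ⁻ = (1/√2)(e0⊗e1 − e1⊗e0), P = |ψ⁻⟩⟨ψ⁻|, and let S((i,j),(k,l)) = P((i,l),(k,j)) be the partial transpose of P on the second qubit. With x₊ = (e0+e1)/√2, x₋ = (e0−e1)/√2, y = (e0+i·e1)/√2, ȳ = (e0−i·e1)/√2, and the rank-one projectors P0 = |e0⟩⟨e0|, P1 = |e1⟩⟨e1|, Q₊ = |x₊⟩⟨x₊|, Q₋ = |x₋⟩⟨x₋|, R₊ = |y⟩⟨y|, R₋ = |ȳ⟩⟨ȳ|, the matrix S satisfies all three pinching conditions of Scenarios 1–3 simultaneously: (P0⊗I₂)S(P0⊗I₂) + (P1⊗I₂)S(P1⊗I₂) = (1/2)(|e0⊗e1⟩⟨e0⊗e1| + |e1⊗e0⟩⟨e1⊗e0|); (Q₊⊗I₂)S(Q₊⊗I₂) + (Q₋⊗I₂)S(Q₋⊗I₂) = (1/2)(|x₊⊗x₋⟩⟨x₊⊗x₋| + |x₋⊗x₊⟩⟨x₋⊗x₊|); and (R₊⊗I₂)S(R₊⊗I₂)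 + (R₋⊗I₂)S(R₋⊗I₂) = (1/2)(|y⊗y⟩⟨y⊗y| + |ȳ⊗ȳ⟩⟨ȳ⊗ȳ|). -/
open Matrix Kronecker

noncomputable section

/-- The singlet projector `P = |ψ⁻⟩⟨ψ⁻|`. -/
def P : Matrix (Fin 2 × Fin 2) (Fin 2 × Fin 2) ℂ := outer psiMinus psiMinus

/-- The partial transpose of `P` on the second qubit:
`S((i,j),(k,l)) = P((i,l),(k,j))`. -/
def S : Matrix (Fin 2 × Fin 2) (Fin 2 × Fin 2) ℂ :=
  Matrix.of fun p q => P (p.1, q.2) (q.1, p.2)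


set_option maxHeartbeats 1000000 in
lemma hS : S = Matrix.of (fun p q : Fin 2 × Fin 2 =>
    if p = (0,1) ∧ q = (0,1) then (1/2 : ℂ)
    else if p = (1,0) ∧ q = (1,0) then (1/2 : ℂ)
    else if p = (0,0) ∧ q = (1,1) then (-1/2 : ℂ)
    else if p = (1,1) ∧ q = (0,0) then (-1/2 : ℂ)
    else 0) := by
  ext ⟨i,j⟩ ⟨k,l⟩
  fin_cases i <;> fin_cases j <;> fin_cases k <;> fin_cases l <;>
    simp [S, P, outer, psiMinus, tens, e0, e1, Prod.ext_iff] <;> ring_nf <;>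
    norm_num [← Complex.ofReal_pow, Real.sq_sqrt, Complex.ext_iff]

set_option maxHeartbeats 4000000 in
theorem popt_state_satisfies_all_three_pinching_conditions :
    ((outer e0 e0 ⊗ₖ (1 : Matrix (Fin 2) (Fin 2) ℂ)) * S *
          (outer e0 e0 ⊗ₖ (1 : Matrix (Fin 2) (Fin 2) ℂ)) +
        (outer e1 e1 ⊗ₖ (1 : Matrix (Fin 2) (Fin 2) ℂ)) * S *
          (outer e1 e1 ⊗ₖ (1 : Matrix (Fin 2) (Fin 2) ℂ))
      = ((1 : ℂ)/2) • (outer (tens e0 e1) (tens e0 e1) + outer (tens e1 e0) (tens e1 e0))) ∧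
    ((outer xp xp ⊗ₖ (1 : Matrix (Fin 2) (Fin 2) ℂ)) * S *
          (outer xp xp ⊗ₖ (1 : Matrix (Fin 2) (Fin 2) ℂ)) +
        (outer xm xm ⊗ₖ (1 : Matrix (Fin 2) (Fin 2) ℂ)) * S *
          (outer xm xm ⊗ₖ (1 : Matrix (Fin 2) (Fin 2) ℂ))
      = ((1 : ℂ)/2) • (outer (tens xp xm) (tens xp xm) + outer (tens xm xp) (tens xm xp))) ∧
    ((outer yp yp ⊗ₖ (1 : Matrix (Fin 2) (Fin 2) ℂ)) * S *
          (outer yp yp ⊗ₖ (1 : Matrix (Fin 2) (Fin 2) ℂ)) +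
        (outer ym ym ⊗ₖ (1 : Matrix (Fin 2) (Fin 2) ℂ)) * S *
          (outer ym ym ⊗ₖ (1 : Matrix (Fin 2) (Fin 2) ℂ))
      = ((1 : ℂ)/2) • (outer (tens yp yp) (tens yp yp) + outer (tens ym ym) (tens ym ym))) := by

  refine ⟨?_, ?_, ?_⟩ <;>
  · rw [hS]
    ext ⟨i,j⟩ ⟨k,l⟩
    fin_cases i <;> fin_cases j <;> fin_cases k <;> fin_cases l <;>
      simp [Matrix.mul_apply, Fintype.sum_prod_type, Fin.sum_univ_succ, outer, xp, xm, yp, ym,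
        tens, e0, e1, Matrix.one_apply, Prod.ext_iff] <;>
      ring_nf <;>
      norm_num [inv_pow, ← Complex.ofReal_pow, Complex.ext_iff, Complex.div_re, Complex.div_im,
        Real.sq_sqrt]
end
end
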